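/- Let E be a real normed space, f, g : E → ℝ convex and continuous, C ⊆ E convex, and suppose the Slater condition holds: there is x₀ ∈ C with g(x₀) < 0. If x̄ ∈ C satisfies g(x̄) ≤ 0 and minimizes f over {x ∈ C : g(x) ≤ 0}, then there exists γ ≥ 0 such that x̄ minimizes x ↦ f(x) + γ·max(g(x), 0) over C, and γ·g(x̄) = 0 (complementary slackness). -/

import Mathlib

/-!
If `g y < 0 < g x`, the convex combination of `x` and `y` with weights proportional to
`-g y` and `g x` is feasible, so `f x̄` is at most the same combination of `f x` and `f y`.
Rearranged, this says that `f x̄ ≤ f x + γ g x` as soon as `γ (-g y) ≥ f y - f x̄`; taking `y`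
to be the Slater point (or `x̄` itself when the constraint is inactive, with `γ = 0`) gives
the multiplier.
-/

open Set

section LagrangeMultiplier

variable {E : Type*} [AddCommGroup E] [Module ℝ E] {C : Set E} {f g : E → ℝ} {xbar x y : E}

theorem le_add_div_mul_of_isMinOn (hf : ConvexOn ℝ C f) (hg : ConvexOn ℝ C g)
    (hmin : IsMinOn f {x ∈ C | g x ≤ 0} xbar) (hy : y ∈ C) (hgy : g y < 0)
    (hx : x ∈ C) (hgx : 0 < g x) :
    f xbar ≤ f x + (f y - f xbar) / (-g y) * g x := by
  set s := g x - g y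
  have hs : 0 < s := by linarith
  have ha : 0 ≤ -g y / s := div_nonneg (by linarith) hs.le
  have hb : 0 ≤ g x / s := div_nonneg hgx.le hs.le
  have hab : -g y / s + g x / s = 1 := by field_simp; ring
  have hz : (-g y / s) • x + (g x / s) • y ∈ C := hf.1 hx hy ha hb hab
  have hgz : g ((-g y / s) • x + (g x / s) • y) ≤ 0 := by
    calc _ ≤ -g y / s * g x + g x / s * g y := hg.2 hx hy ha hb hab
      _ = 0 := by ring
  have hfz : f xbar ≤ -g y / s * f x + g x / s * f y :=
    (hmin ⟨hz, hgz⟩).trans (hf.2 hx hy ha hb hab)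
  have hcleared : s * f xbar ≤ -g y * f x + g x * f y := by
    calc s * f xbar ≤ s * (-g y / s * f x + g x / s * f y) := by gcongr
      _ = -g y * f x + g x * f y := by field_simp
  rw [div_mul_eq_mul_div, ← sub_le_iff_le_add', le_div_iff₀ (by linarith)]
  linarith

theorem le_add_mul_max_of_isMinOn (hf : ConvexOn ℝ C f) (hg : ConvexOn ℝ C g)
    (hmin : IsMinOn f {x ∈ C | g x ≤ 0} xbar) (hy : y ∈ C) (hgy : g y < 0) {γ : ℝ}
    (hγ : 0 ≤ γ) (hγy : f y - f xbar ≤ γ * -g y) (hx : x ∈ C) :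
    f xbar ≤ f x + γ * max (g x) 0 := by
  rcases le_or_gt (g x) 0 with hgx | hgx
  · simpa [max_eq_right hgx] using hmin ⟨hx, hgx⟩
  · have hdiv : (f y - f xbar) / (-g y) ≤ γ := by rwa [div_le_iff₀ (by linarith)]
    calc f xbar ≤ f x + (f y - f xbar) / (-g y) * g x :=
          le_add_div_mul_of_isMinOn hf hg hmin hy hgy hx hgx
      _ ≤ f x + γ * max (g x) 0 := by gcongr; exact le_max_left _ _

end LagrangeMultiplier

theorem stmt_14_general {E : Type*} [NormedAddCommGroup E] [NormedSpace ℝ E]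
    {C : Set E} (hC : Convex ℝ C) {f g : E → ℝ}
    (hf : ConvexOn ℝ Set.univ f) (hg : ConvexOn ℝ Set.univ g)
    (hslater : ∃ x₀ ∈ C, g x₀ < 0)
    {xbar : E} (hxbar : xbar ∈ C) (hfeas : g xbar ≤ 0)
    (hmin : ∀ x ∈ C, g x ≤ 0 → f xbar ≤ f x) :
    ∃ γ : ℝ, 0 ≤ γ ∧
      (∀ x ∈ C, f xbar + γ * max (g xbar) 0 ≤ f x + γ * max (g x) 0) ∧
      γ * g xbar = 0 := by
  obtain ⟨x₀, hx₀, hgx₀⟩ := hslater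
  have hfC := hf.subset (subset_univ C) hC
  have hgC := hg.subset (subset_univ C) hC
  have hminOn : IsMinOn f {x ∈ C | g x ≤ 0} xbar := fun x hx => hmin x hx.1 hx.2
  suffices ∃ γ : ℝ, 0 ≤ γ ∧ (∀ x ∈ C, f xbar ≤ f x + γ * max (g x) 0) ∧ γ * g xbar = 0 by
    simpa only [max_eq_right hfeas, mul_zero, add_zero] using this
  rcases hfeas.lt_or_eq with hlt | heq
  · exact ⟨0, le_rfl, fun x hx => le_add_mul_max_of_isMinOn hfC hgC hminOn hxbar hlt le_rfl
      (by simp) hx, zero_mul _⟩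
  · set γ := max ((f x₀ - f xbar) / -g x₀) 0
    have hγ : f x₀ - f xbar ≤ γ * -g x₀ := by
      calc f x₀ - f xbar = (f x₀ - f xbar) / -g x₀ * -g x₀ :=
            (div_mul_cancel₀ _ (by linarith)).symm
        _ ≤ γ * -g x₀ := mul_le_mul_of_nonneg_right (le_max_left _ _) (by linarith)
    exact ⟨γ, le_max_right _ _, fun x hx => le_add_mul_max_of_isMinOn hfC hgC hminOn hx₀ hgx₀
      (le_max_right _ _) hγ hx, by rw [heq, mul_zero]⟩

/-- Lagrange principle for a Slater-regular convex program: if `xbar` minimizes `f`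
over `{x ∈ C | g x ≤ 0}`, there is a multiplier `γ ≥ 0` such that `xbar` minimizes
the Lagrangian `f + γ · g⁺` over `C`, with complementary slackness `γ · g xbar = 0`. -/
theorem stmt_14 {E : Type*} [NormedAddCommGroup E] [NormedSpace ℝ E]
    {C : Set E} (hC : Convex ℝ C) {f g : E → ℝ}
    (hf : ConvexOn ℝ Set.univ f) (hg : ConvexOn ℝ Set.univ g)
    (hfc : Continuous f) (hgc : Continuous g)
    (hslater : ∃ x₀ ∈ C, g x₀ < 0)
    {xbar : E} (hxbar : xbar ∈ C) (hfeas : g xbar ≤ 0)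
    (hmin : ∀ x ∈ C, g x ≤ 0 → f xbar ≤ f x) :
    ∃ γ : ℝ, 0 ≤ γ ∧
      (∀ x ∈ C, f xbar + γ * max (g xbar) 0 ≤ f x + γ * max (g x) 0) ∧
      γ * g xbar = 0 :=
  stmt_14_general hC hf hg hslater hxbar hfeas hmin
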